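/- Let $v$ be a Schwartz function on $\mathbb{R}^2$. Define the extended Wigner transform $\tilde{W}F(x,y) = (2\pi)^{-1/2} \int_{\mathbb{R}} e^{ipy} F\big(\tfrac{x+p}{\sqrt{2}}, \tfrac{x-p}{\sqrt{2}}\big)\, dp$ and the partial Fourier transform $\mathcal{F}_2 F(x,y) = (2\pi)^{-1/2} \int_{\mathbb{R}} e^{-ipy} F(x,p)\, dp$. Let $u(t,x,y) = (2\pi)^{-1} (\sin t)^{-1} \iint_{\mathbb{R}^2} v(a,b) \exp\big( i\,\frac{(xy+ab)\cos t - (ay+xb)}{\sin t} \big)\, da\, db$ be the gyrator transform of $v$. Then for all $(x,y) \in \mathbb{R}^2$: $u(\pi/4, x, y) = \tilde{W}(\mathcal{F}_2 v)(x, -y)$. -/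

import Mathlib

/-! At `t = π/4` we have `cos t = sin t = 1/√2`, so the gyrator kernel has the phase
`xy + ab - √2(ay + xb)`. On the other side, substituting `p = √2 a - x` in the outer integral
of `W̃(𝓕₂v)(x, -y)` turns its two one-dimensional integrals into an iterated integral of `v`
against the same phase, with the Jacobian `√2` and the two factors `(2π)^{-1/2}` reproducing
the normalisation `(2π)⁻¹ (sin (π/4))⁻¹`. Fubini, justified because `v` is integrable and the
kernel is unimodular, identifies the iterated integral with the double one. -/

noncomputable section

open MeasureTheory

/-- The extended Wigner transform
`W̃F(x,y) = (2π)^{-1/2} ∫ e^{ipy} F((x+p)/√2, (x-p)/√2) dp`. -/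
def extWigner (F : ℝ × ℝ → ℂ) (x y : ℝ) : ℂ :=
  ((Real.sqrt (2 * Real.pi))⁻¹ : ℝ) *
    ∫ p : ℝ, Complex.exp (Complex.I * (p : ℂ) * (y : ℂ)) *
      F ((x + p) / Real.sqrt 2, (x - p) / Real.sqrt 2)

/-- The (renormalized) partial Fourier transform in the second variable
`𝓕₂F(x,y) = (2π)^{-1/2} ∫ e^{-ipy} F(x,p) dp`. -/
def partialFourier2 (F : ℝ × ℝ → ℂ) (x y : ℝ) : ℂ :=
  ((Real.sqrt (2 * Real.pi))⁻¹ : ℝ) *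
    ∫ p : ℝ, Complex.exp (-(Complex.I * (p : ℂ) * (y : ℂ))) * F (x, p)

/-- The gyrator transform of `v` at time `t`:
`u(t,x,y) = (2π)⁻¹(sin t)⁻¹ ∬ v(a,b) e^{i((xy+ab)cos t - (ay+xb))/sin t} da db`. -/
def gyrator (v : SchwartzMap (ℝ × ℝ) ℂ) (t x y : ℝ) : ℂ :=
  ((2 * Real.pi)⁻¹ : ℝ) * (((Real.sin t)⁻¹ : ℝ) : ℂ) *
    ∫ q : ℝ × ℝ, v q * Complex.exp (Complex.I *
      ((((x : ℂ) * y + (q.1 : ℂ) * q.2) * ((Real.cos t : ℝ) : ℂ) -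
        ((q.1 : ℂ) * y + (x : ℂ) * q.2)) / ((Real.sin t : ℝ) : ℂ)))

theorem integral_comp_mul_sub_of_pos {E : Type*} [NormedAddCommGroup E] [NormedSpace ℝ E]
    (g : ℝ → E) {c : ℝ} (hc : 0 < c) (d : ℝ) :
    ∫ a : ℝ, g (c * a - d) = c⁻¹ • ∫ p : ℝ, g p := by
  have hscale : ∫ a : ℝ, g (c * a - d) = |c⁻¹| • ∫ u : ℝ, g (u - d) :=
    Measure.integral_comp_mul_left (fun u => g (u - d)) c
  rw [hscale, integral_sub_right_eq_self, abs_of_pos (inv_pos.2 hc)]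

theorem MeasureTheory.Integrable.mul_exp_I_mul_ofReal {α : Type*} [MeasurableSpace α]
    {μ : Measure α} {f : α → ℂ} (hf : Integrable f μ) {φ : α → ℝ} (hφ : Measurable φ) :
    Integrable (fun q => f q * Complex.exp (Complex.I * φ q)) μ :=
  hf.mul_bdd (c := 1) (by fun_prop)
    (Filter.Eventually.of_forall fun q => (Complex.norm_exp_I_mul_ofReal _).le)

def quarterGyratorPhase (x y a b : ℝ) : ℝ := x * y + a * b - √2 * (a * y + x * b)

theorem gyrator_pi_div_four (v : SchwartzMap (ℝ × ℝ) ℂ) (x y : ℝ) :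
    gyrator v (Real.pi / 4) x y = ((2 * Real.pi)⁻¹ : ℝ) * (√2 : ℂ) *
      ∫ q : ℝ × ℝ, v q * Complex.exp (Complex.I * quarterGyratorPhase x y q.1 q.2) := by
  have hinv : (√2 / 2)⁻¹ = √2 := by rw [inv_div, Real.div_sqrt]
  have hs2 : (√2 : ℂ) ^ 2 = 2 := by exact_mod_cast Real.sq_sqrt zero_le_two
  rw [gyrator, Real.sin_pi_div_four, Real.cos_pi_div_four, hinv]
  congr 2 with q
  congr 3
  unfold quarterGyratorPhase
  push_cast
  field_simp
  linear_combination ((q.1 : ℂ) * y + (x : ℂ) * q.2) * hs2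

theorem extWigner_partialFourier2_neg (F : ℝ × ℝ → ℂ) (x y : ℝ) :
    extWigner (fun q => partialFourier2 F q.1 q.2) x (-y) = ((2 * Real.pi)⁻¹ : ℝ) * (√2 : ℂ) *
      ∫ a : ℝ, ∫ b : ℝ, F (a, b) * Complex.exp (Complex.I * quarterGyratorPhase x y a b) := by
  set g : ℝ → ℂ := fun p => Complex.exp (Complex.I * p * ((-y : ℝ) : ℂ)) *
    ∫ b : ℝ, Complex.exp (-(Complex.I * b * (((x - p) / √2 : ℝ) : ℂ))) * F ((x + p) / √2, b)
  have hs0 : √2 ≠ 0 := (Real.sqrt_pos.2 zero_lt_two).ne'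
  have hsub : ∀ a : ℝ, g (√2 * a - x) =
      ∫ b : ℝ, F (a, b) * Complex.exp (Complex.I * quarterGyratorPhase x y a b) := by
    intro a
    have hfst : (x + (√2 * a - x)) / √2 = a := by field_simp; ring
    have hsnd : (x - (√2 * a - x)) / √2 = √2 * x - a := by
      rw [div_eq_iff hs0]
      linear_combination (-x) * Real.sq_sqrt zero_le_two
    simp only [g, hfst, hsnd, ← integral_const_mul]
    congr 1 with b
    rw [← mul_assoc, ← Complex.exp_add, mul_comm]
    congr 2
    unfold quarterGyratorPhase
    push_cast
    ring_nf
  have hnorm : (((√(2 * Real.pi))⁻¹ : ℝ) : ℂ) * (((√(2 * Real.pi))⁻¹ : ℝ) : ℂ) =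
      ((2 * Real.pi)⁻¹ : ℝ) := by
    rw [← Complex.ofReal_mul, ← mul_inv, Real.mul_self_sqrt (by positivity)]
  calc extWigner (fun q => partialFourier2 F q.1 q.2) x (-y)
      = (((√(2 * Real.pi))⁻¹ : ℝ) : ℂ) * (((√(2 * Real.pi))⁻¹ : ℝ) : ℂ) * ∫ p : ℝ, g p := by
        simp only [extWigner, partialFourier2, g, mul_left_comm _ (((√(2 * Real.pi))⁻¹ : ℝ) : ℂ),
          integral_const_mul, mul_assoc]
    _ = ((2 * Real.pi)⁻¹ : ℝ) * (√2 : ℂ) * ∫ a : ℝ, g (√2 * a - x) := by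
        rw [hnorm, integral_comp_mul_sub_of_pos g (Real.sqrt_pos.2 zero_lt_two), Complex.real_smul,
          ← mul_assoc, mul_assoc _ (√2 : ℂ), ← Complex.ofReal_mul, mul_inv_cancel₀ hs0,
          Complex.ofReal_one, mul_one]
    _ = _ := by simp only [hsub]

/-- At `t = π/4` the gyrator transform is the extended Wigner transform of the partial
Fourier transform: `u(π/4, x, y) = W̃(𝓕₂v)(x, -y)`. -/
theorem gyrator_pi_div_four_eq_extWigner_partialFourier
    (v : SchwartzMap (ℝ × ℝ) ℂ) (x y : ℝ) :
    gyrator v (Real.pi / 4) x y =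
      extWigner (fun q => partialFourier2 (fun r => v r) q.1 q.2) x (-y) := by
  rw [gyrator_pi_div_four, extWigner_partialFourier2_neg, Measure.volume_eq_prod,
    integral_prod _ (v.integrable.mul_exp_I_mul_ofReal (by unfold quarterGyratorPhase; fun_prop))]
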